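/- Suppose a₂ > 0, b ≠ 0, f_M(1) ≤ 0, and let r_T ∈ (0,1] be the unique zero of f_M. If n̂ : [0,∞) → ℝ³ is continuous with |n̂(t)| = 1 for all t, and r : [0,∞) → [0,1] is differentiable with r′(t) = F(r(t), n̂(t)) for all t and r(0) ∈ [r_T, 1], then r(t) ≤ r(0) for all t ≥ 0. In particular, no admissible trajectory starting at or above the trap radius r_T can ever increase the Bloch radius above its initial value. -/

import Mathlib

/-!
Since every `a j ≥ 0`, the dissipation term `∑ j, a j * (1 - n j ^ 2)` is nonnegative on the unit
sphere, so `F a b ρ n` is antitone in `ρ`. Hence for `ρ ≥ r_T` and unit `n`,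
`F a b ρ n ≤ F a b r_T n ≤ fM a b r_T = 0`: the rate is nonpositive wherever the radius is at least
`r_T`. A trajectory starting at `r 0 ≥ r_T` therefore cannot rise above `r 0`, because whenever it
is above `r 0` it is above `r_T` and so is not increasing.
-/

/-- The rate F(r,n) = Σ_j b_j n_j − r Σ_j a_j (1 − n_j²). -/
noncomputable def F (a b : Fin 3 → ℝ) (r : ℝ) (n : Fin 3 → ℝ) : ℝ :=
  (∑ j, b j * n j) - r * ∑ j, a j * (1 - n j ^ 2)

/-- f_M(r) = sup { F(r,n) : |n| = 1 }. -/
noncomputable def fM (a b : Fin 3 → ℝ) (r : ℝ) : ℝ :=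
  sSup (F a b r '' {n : Fin 3 → ℝ | (∑ j, n j ^ 2) = 1})

/-- f_m(r) = inf { F(r,n) : |n| = 1 }. -/
noncomputable def fm (a b : Fin 3 → ℝ) (r : ℝ) : ℝ :=
  sInf (F a b r '' {n : Fin 3 → ℝ | (∑ j, n j ^ 2) = 1})

open Set

section UnitSphere

variable {ι : Type*} [Fintype ι] {n : ι → ℝ}

lemma sq_le_one_of_sum_sq_eq_one (hn : ∑ j, n j ^ 2 = 1) (j : ι) : n j ^ 2 ≤ 1 :=
  hn ▸ Finset.single_le_sum (fun i _ => sq_nonneg (n i)) (Finset.mem_univ j)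

lemma isCompact_setOf_sum_sq_eq_one : IsCompact {n : ι → ℝ | ∑ j, n j ^ 2 = 1} := by
  refine (isCompact_univ_pi fun _ => isCompact_Icc (a := -1) (b := 1)).of_isClosed_subset
    (isClosed_eq (by fun_prop) continuous_const) fun n hn j _ => ?_
  exact abs_le.1 (abs_le_one_iff_mul_self_le_one.2 (by nlinarith [sq_le_one_of_sum_sq_eq_one hn j]))

lemma sum_mul_one_sub_sq_nonneg {a : ι → ℝ} (ha : ∀ j, 0 ≤ a j) (hn : ∑ j, n j ^ 2 = 1) :
    0 ≤ ∑ j, a j * (1 - n j ^ 2) :=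
  Finset.sum_nonneg fun j _ =>
    mul_nonneg (ha j) (sub_nonneg.2 (sq_le_one_of_sum_sq_eq_one hn j))

end UnitSphere

lemma image_le_left_of_deriv_nonpos_above {f f' : ℝ → ℝ} {a t : ℝ}
    (hf : ∀ x ∈ Ici a, HasDerivWithinAt f (f' x) (Ici a) x)
    (hf' : ∀ x ∈ Ici a, f a < f x → f' x ≤ 0) (ht : a ≤ t) : f t ≤ f a := by
  have hcont : ContinuousOn f (Icc a t) := fun x hx =>
    (hf x hx.1).continuousWithinAt.mono Icc_subset_Ici_self
  refine le_of_forall_pos_le_add fun ε hε => ?_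
  -- fence `f` by the barrier `f a + δ * (x - a + 1)`, which `f` can only touch above `f a`
  set δ := ε / (t - a + 1)
  have hδ : 0 < δ := div_pos hε (by linarith)
  have hB : ∀ x, HasDerivAt (fun x => f a + δ * (x - a + 1)) δ x := fun x => by
    simpa using ((((hasDerivAt_id x).sub_const a).add_const 1).const_mul δ).const_add (f a)
  have hfence := image_le_of_deriv_right_lt_deriv_boundary hcont
    (fun x hx => (hf x hx.1).mono (Ici_subset_Ici.2 hx.1)) (by simp [hδ.le]) hB
    (fun x hx hfx => (hf' x hx.1 (by rw [hfx]; nlinarith [hx.1])).trans_lt hδ) ⟨ht, le_rfl⟩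
  calc f t ≤ f a + δ * (t - a + 1) := hfence
    _ = f a + ε := by rw [div_mul_cancel₀ _ (by linarith)]

variable {a b n : Fin 3 → ℝ}

lemma F_le_fM (ρ : ℝ) (hn : ∑ j, n j ^ 2 = 1) : F a b ρ n ≤ fM a b ρ := by
  have hF : Continuous (F a b ρ) := by unfold F; fun_prop
  exact le_csSup (isCompact_setOf_sum_sq_eq_one.bddAbove_image hF.continuousOn) ⟨n, hn, rfl⟩

lemma antitone_F (ha : ∀ j, 0 ≤ a j) (hn : ∑ j, n j ^ 2 = 1) : Antitone (F a b · n) :=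
  fun _ _ hρ => sub_le_sub_left
    (mul_le_mul_of_nonneg_right hρ (sum_mul_one_sub_sq_nonneg ha hn)) _

lemma F_nonpos_of_fM_eq_zero {rT ρ : ℝ} (ha : ∀ j, 0 ≤ a j) (hzero : fM a b rT = 0)
    (hρ : rT ≤ ρ) (hn : ∑ j, n j ^ 2 = 1) : F a b ρ n ≤ 0 :=
  calc F a b ρ n ≤ F a b rT n := antitone_F ha hn hρ
    _ ≤ fM a b rT := F_le_fM rT hn
    _ = 0 := hzero

theorem no_escape_above_trap_general (a b : Fin 3 → ℝ)
    (h12 : a 1 ≤ a 0) (h23 : a 2 ≤ a 1) (h3 : 0 ≤ a 2)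
    (rT : ℝ) (hzero : fM a b rT = 0)
    (nh : ℝ → Fin 3 → ℝ) (r : ℝ → ℝ)
    (hunit : ∀ t ∈ Set.Ici (0 : ℝ), (∑ j, nh t j ^ 2) = 1)
    (hderiv : ∀ t ∈ Set.Ici (0 : ℝ),
      HasDerivWithinAt r (F a b (r t) (nh t)) (Set.Ici (0 : ℝ)) t)
    (h0 : r 0 ∈ Set.Icc rT 1) :
    ∀ t : ℝ, 0 ≤ t → r t ≤ r 0 := by
  have ha : ∀ j, 0 ≤ a j := by
    intro j
    fin_cases j <;> dsimp <;> linarith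
  intro t ht
  exact image_le_left_of_deriv_nonpos_above hderiv
    (fun u hu hru => F_nonpos_of_fM_eq_zero ha hzero (h0.1.trans hru.le) (hunit u hu)) ht

/-- Starting at or above the trap radius r_T, no admissible trajectory can ever raise the
Bloch radius above its initial value. -/
theorem no_escape_above_trap (a b : Fin 3 → ℝ)
    (h12 : a 1 ≤ a 0) (h23 : a 2 ≤ a 1) (h3 : 0 ≤ a 2)
    (ha2 : 0 < a 1) (hb : b ≠ 0) (hf1 : fM a b 1 ≤ 0)
    (rT : ℝ) (hrT : rT ∈ Set.Ioc (0 : ℝ) 1) (hzero : fM a b rT = 0)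
    (huniq : ∀ r' ∈ Set.Ioc (0 : ℝ) 1, fM a b r' = 0 → r' = rT)
    (nh : ℝ → Fin 3 → ℝ) (r : ℝ → ℝ)
    (hcont : ∀ j, ContinuousOn (fun t => nh t j) (Set.Ici (0 : ℝ)))
    (hunit : ∀ t ∈ Set.Ici (0 : ℝ), (∑ j, nh t j ^ 2) = 1)
    (hrange : ∀ t ∈ Set.Ici (0 : ℝ), r t ∈ Set.Icc (0 : ℝ) 1)
    (hderiv : ∀ t ∈ Set.Ici (0 : ℝ),
      HasDerivWithinAt r (F a b (r t) (nh t)) (Set.Ici (0 : ℝ)) t)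
    (h0 : r 0 ∈ Set.Icc rT 1) :
    ∀ t : ℝ, 0 ≤ t → r t ≤ r 0 :=
  no_escape_above_trap_general a b h12 h23 h3 rT hzero nh r hunit hderiv h0
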